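/- Any triangular combinatorial embedding of the complete graph K7 (a rotation system on K7 all of whose traced faces are triangles) is isomorphic, as a combinatorial embedding, to the classical toroidal embedding with rotation ρ_x(y) = 5y − 4x (mod 7); in particular its 14 triangular faces are exactly the blocks of the two orthogonal Fano planes { {i,i+1,i+3} } and { {i,i+1,i+5} } (i ∈ Z/7). -/

import Mathlib

/-- A Steiner triple system: every block has 3 points and every pair of
distinct points lies in exactly one block. -/
def IsSteiner {V : Type*} [DecidableEq V] (B : Finset (Finset V)) : Prop :=
  (∀ b ∈ B, b.card = 3) ∧
  ∀ x y : V, x ≠ y → ∃! b : Finset V, b ∈ B ∧ x ∈ b ∧ y ∈ b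

/-- A Fano plane: a Steiner triple system on a 7-point set. -/
def IsFano {V : Type*} [DecidableEq V] [Fintype V] (B : Finset (Finset V)) : Prop :=
  Fintype.card V = 7 ∧ IsSteiner B

/-- Two systems on the same point set are disjoint if they share no block. -/
def DisjointSTS {V : Type*} [DecidableEq V] (B1 B2 : Finset (Finset V)) : Prop :=
  ∀ b : Finset V, ¬ (b ∈ B1 ∧ b ∈ B2)

/-- Orthogonality of two Steiner triple systems: disjoint, and two distinct
pairs lying in blocks of the first system with a common third point never have
the same third point in the second system. -/
def OrthogonalSTS {V : Type*} [DecidableEq V] (B1 B2 : Finset (Finset V)) : Prop :=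
  DisjointSTS B1 B2 ∧
  ∀ x y z u v a b : V, ({x, y} : Finset V) ≠ ({u, v} : Finset V) →
    ({x, y, z} : Finset V) ∈ B1 → ({u, v, z} : Finset V) ∈ B1 →
    ({x, y, a} : Finset V) ∈ B2 → ({u, v, b} : Finset V) ∈ B2 → a ≠ b

/-- The Fano plane on `ZMod 7` with blocks `{i, i+1, i+3}`. -/
def fanoB1 : Finset (Finset (ZMod 7)) :=
  Finset.univ.image (fun i : ZMod 7 => ({i, i + 1, i + 3} : Finset (ZMod 7)))

/-- The Fano plane on `ZMod 7` with blocks `{i, i+1, i+5}`. -/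
def fanoB2 : Finset (Finset (ZMod 7)) :=
  Finset.univ.image (fun i : ZMod 7 => ({i, i + 1, i + 5} : Finset (ZMod 7)))

/-- A rotation system on `K7` (vertex set `ZMod 7`): to each vertex `x` is assigned a
permutation fixing `x` and acting as a single 6-cycle on the remaining vertices. -/
def IsRotationK7 (ρ : ZMod 7 → Equiv.Perm (ZMod 7)) : Prop :=
  ∀ x : ZMod 7, ρ x x = x ∧
    ∀ y : ZMod 7, y ≠ x → (ρ x y ≠ x ∧ ∀ z : ZMod 7, z ≠ x → ∃ k : ℕ, ((ρ x) ^ k) y = z)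

/-- The permutation `y ↦ 5y` of `ZMod 7`. -/
def mul5 : Equiv.Perm (ZMod 7) :=
  ⟨fun y => 5 * y, fun y => 3 * y, by decide, by decide⟩

/-- The rotation of the classical toroidal embedding of `K7`: `ρ_x(y) = 5y - 4x`. -/
def rhoClass (x : ZMod 7) : Equiv.Perm (ZMod 7) := mul5.trans (Equiv.addLeft (-(4 * x)))


/-!
Relabel the vertices so that the rotation at `0` is `y ↦ 5y`, the 6-cycle `(1 5 4 6 2 3)`.
The faces through `0` then force the rotation at every `a ≠ 0` to be a 6-cycle
`(5a 0 3a u v w)` with `{u, v, w} = {2a, 4a, 6a}`. A face `{a, 3a, 2a}` or `{a, 4a, 5a}` would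
close the 3-cycle `(5c 0 3c)` at `c = 3a`, resp. `c = 5a`; hence `u ≠ 2a` and `w ≠ 4a`.
If `u = 4a` at some `a`, the face `{a, 3a, 4a}` gives `w = 6b` at `b = 3a`, which leaves only the
classical row `(5b 0 3b 4b 2b 6b)` there, so again `u = 4b`; as `3` generates `(ZMod 7)ˣ`, every
row is classical. Otherwise every row is `(5a 0 3a 6a 4a 2a)`: this is the mirror image of the
classical embedding under `y ↦ y⁻¹`.
-/

open Equiv

instance fact_prime_seven : Fact (Nat.Prime 7) := ⟨by norm_num⟩

section Conjugation

variable {V : Type*}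

def IsTriangular (ρ : V → Perm V) : Prop :=
  ∀ x y, x ≠ y → ρ (ρ x y) x = y

def conjRot (σ : Perm V) (ρ : V → Perm V) (x : V) : Perm V :=
  σ * ρ (σ⁻¹ x) * σ⁻¹

theorem conjRot_apply_apply (σ : Perm V) (ρ : V → Perm V) (x y : V) :
    conjRot σ ρ (σ x) (σ y) = σ (ρ x y) := by
  simp [conjRot]

theorem conjRot_one (ρ : V → Perm V) : conjRot 1 ρ = ρ := by
  funext x
  simp [conjRot]

theorem conjRot_mul (σ τ : Perm V) (ρ : V → Perm V) :
    conjRot (σ * τ) ρ = conjRot σ (conjRot τ ρ) := by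
  funext x
  simp [conjRot, mul_assoc]

theorem apply_eq_of_conjRot_eq {σ : Perm V} {ρ τ : V → Perm V} (h : conjRot σ ρ = τ)
    (x y : V) : σ (ρ x y) = τ (σ x) (σ y) := by
  rw [← h, conjRot_apply_apply]

theorem IsTriangular.conjRot {ρ : V → Perm V} (h : IsTriangular ρ) (σ : Perm V) :
    IsTriangular (conjRot σ ρ) := by
  intro x y hxy
  obtain ⟨x, rfl⟩ := σ.surjective x
  obtain ⟨y, rfl⟩ := σ.surjective y
  rw [conjRot_apply_apply, conjRot_apply_apply, h x y (ne_of_apply_ne σ hxy)]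

theorem IsTriangular.apply_apply_eq {ρ : V → Perm V} (h : IsTriangular ρ) {x y : V}
    (hx : ρ x x = x) (hxy : x ≠ y) : ρ y (ρ x y) = x := by
  have hne : ρ x y ≠ x := fun hyx => hxy ((ρ x).injective (hyx.trans hx.symm)).symm
  simpa only [h x y hxy] using h (ρ x y) x hne

theorem faces_of_conjRot_eq [DecidableEq V] {σ : Perm V} {ρ τ : V → Perm V}
    {B : Finset (Finset V)} (h : conjRot σ ρ = τ)
    (hmem : ∀ u v, u ≠ v → ({u, v, τ u v} : Finset V) ∈ B)
    (hsurj : ∀ t ∈ B, ∃ u v, u ≠ v ∧ ({u, v, τ u v} : Finset V) = t) :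
    (∀ x y, x ≠ y → ({σ x, σ y, σ (ρ x y)} : Finset V) ∈ B) ∧
      ∀ t ∈ B, ∃ x y, x ≠ y ∧ ({σ x, σ y, σ (ρ x y)} : Finset V) = t := by
  refine ⟨fun x y hxy => ?_, fun t ht => ?_⟩
  · rw [apply_eq_of_conjRot_eq h]
    exact hmem _ _ (σ.injective.ne hxy)
  · obtain ⟨u, v, huv, rfl⟩ := hsurj t ht
    refine ⟨σ⁻¹ u, σ⁻¹ v, σ⁻¹.injective.ne huv, ?_⟩
    rw [apply_eq_of_conjRot_eq h]
    simp

end Conjugation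

namespace IsRotationK7

variable {ρ : ZMod 7 → Perm (ZMod 7)}

theorem conjRot (h : IsRotationK7 ρ) (σ : Perm (ZMod 7)) :
    IsRotationK7 (_root_.conjRot σ ρ) := by
  intro x
  obtain ⟨x, rfl⟩ := σ.surjective x
  obtain ⟨hfix, horbit⟩ := h x
  refine ⟨by rw [conjRot_apply_apply, hfix], fun y hy => ?_⟩
  obtain ⟨y, rfl⟩ := σ.surjective y
  have hyx : y ≠ x := ne_of_apply_ne σ hy
  refine ⟨by rw [conjRot_apply_apply]; exact σ.injective.ne ((horbit y hyx).1), fun z hz => ?_⟩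
  obtain ⟨z, rfl⟩ := σ.surjective z
  obtain ⟨k, hk⟩ := (horbit y hyx).2 z (ne_of_apply_ne σ hz)
  refine ⟨k, ?_⟩
  simp [_root_.conjRot, conj_pow, hk]

theorem apply_ne_self (h : IsRotationK7 ρ) {x y : ZMod 7} (hy : y ≠ x) : ρ x y ≠ y := by
  intro hfix
  obtain ⟨z, hzx, hzy⟩ := (by decide : ∀ x y : ZMod 7, ∃ z, z ≠ x ∧ z ≠ y) x y
  obtain ⟨k, hk⟩ := ((h x).2 y hy).2 z hzx
  exact hzy (hk ▸ Perm.pow_apply_eq_self_of_apply_eq_self hfix k)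

theorem support_eq (h : IsRotationK7 ρ) (x : ZMod 7) :
    (ρ x).support = Finset.univ.erase x := by
  ext y
  by_cases hy : y = x
  · simp [hy, (h x).1]
  · simp [hy, h.apply_ne_self hy]

theorem isCycle (h : IsRotationK7 ρ) (x : ZMod 7) : (ρ x).IsCycle := by
  have hx1 : x + 1 ≠ x := by simp
  refine ⟨x + 1, h.apply_ne_self hx1, fun z hz => ?_⟩
  have hzx : z ≠ x := fun hzx => hz (hzx ▸ (h x).1)
  obtain ⟨k, hk⟩ := ((h x).2 (x + 1) hx1).2 z hzx
  exact ⟨k, by simpa using hk⟩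

theorem toList_eq_iterate (h : IsRotationK7 ρ) {x y : ZMod 7} (hy : y ≠ x) :
    (ρ x).toList y = List.iterate (ρ x) y 6 := by
  rw [Perm.toList, (h.isCycle x).cycleOf_eq (h.apply_ne_self hy), h.support_eq]
  simp

theorem nodup_iterate (h : IsRotationK7 ρ) {x y : ZMod 7} (hy : y ≠ x) :
    (x :: List.iterate (ρ x) y 6).Nodup := by
  refine List.nodup_cons.2 ⟨fun hx => ?_, h.toList_eq_iterate hy ▸ Perm.nodup_toList _ _⟩
  obtain ⟨m, -, hm⟩ := List.mem_iterate.1 hx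
  have hfix : (ρ x)^[m] x = x := Function.iterate_fixed (h x).1 m
  exact hy ((ρ x).injective.iterate m (hfix.trans hm)).symm

theorem formPerm_iterate (h : IsRotationK7 ρ) {x y : ZMod 7} (hy : y ≠ x) :
    (List.iterate (ρ x) y 6).formPerm = ρ x := by
  rw [← h.toList_eq_iterate hy, Perm.formPerm_toList,
    (h.isCycle x).cycleOf_eq (h.apply_ne_self hy)]

theorem exists_conjRot_eq_mul5 (h : IsRotationK7 ρ) :
    ∃ σ : Perm (ZMod 7), _root_.conjRot σ ρ 0 = mul5 := by
  have hcycleType : (ρ 0).cycleType = mul5.cycleType := by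
    rw [(h.isCycle 0).cycleType, h.support_eq]
    decide
  obtain ⟨σ, hσ⟩ := isConj_iff.1 (Perm.isConj_iff_cycleType_eq.2 hcycleType)
  have hσ0 : σ 0 = 0 := by
    have hfix : mul5 (σ 0) = σ 0 := by simp [← hσ, (h 0).1]
    exact (by decide : ∀ z, mul5 z = z → z = 0) _ hfix
  have hσ0' : σ⁻¹ 0 = 0 := Perm.inv_eq_iff_eq.2 hσ0.symm
  exact ⟨σ, by rw [_root_.conjRot, hσ0', hσ]⟩

end IsRotationK7

/-- `y ↦ y⁻¹` (and `0 ↦ 0`), computed as `y ↦ y ^ 5` by Fermat's little theorem. -/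
def invPerm : Perm (ZMod 7) :=
  ⟨fun y => y ^ 5, fun y => y ^ 5, by decide, by decide⟩

def rhoMirror : ZMod 7 → Perm (ZMod 7) :=
  conjRot invPerm fun x => (rhoClass x)⁻¹

theorem invPerm_mul_self : invPerm * invPerm = 1 := by decide

theorem rhoClass_zero : rhoClass 0 = mul5 := by decide

theorem rhoMirror_zero : rhoMirror 0 = mul5 := by decide

theorem rhoClass_eq_formPerm {a : ZMod 7} (ha : a ≠ 0) :
    rhoClass a = [5 * a, 0, 3 * a, 4 * a, 2 * a, 6 * a].formPerm := by
  revert a; decide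

theorem rhoMirror_eq_formPerm {a : ZMod 7} (ha : a ≠ 0) :
    rhoMirror a = [5 * a, 0, 3 * a, 6 * a, 4 * a, 2 * a].formPerm := by
  revert a; decide

theorem rhoClass_apply_three_mul (a : ZMod 7) : rhoClass a (3 * a) = 4 * a := by
  revert a; decide

theorem rhoClass_faces_mem : ∀ u v : ZMod 7, u ≠ v →
    ({u, v, rhoClass u v} : Finset (ZMod 7)) ∈ fanoB1 ∪ fanoB2 := by
  decide

set_option maxRecDepth 4000 in
theorem rhoClass_faces_surj : ∀ t ∈ fanoB1 ∪ fanoB2,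
    ∃ u v : ZMod 7, u ≠ v ∧ ({u, v, rhoClass u v} : Finset (ZMod 7)) = t := by
  decide

theorem rhoClass_inv_faces_mem : ∀ u v : ZMod 7, u ≠ v →
    ({u, v, (rhoClass u)⁻¹ v} : Finset (ZMod 7)) ∈ fanoB1 ∪ fanoB2 := by
  decide

set_option maxRecDepth 4000 in
theorem rhoClass_inv_faces_surj : ∀ t ∈ fanoB1 ∪ fanoB2,
    ∃ u v : ZMod 7, u ≠ v ∧ ({u, v, (rhoClass u)⁻¹ v} : Finset (ZMod 7)) = t := by
  decide

theorem hexagon_classical :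
    ∀ a u v : ZMod 7, [a, 5 * a, 0, 3 * a, u, v, 6 * a].Nodup → u ≠ 2 * a →
      u = 4 * a ∧ v = 2 * a := by
  decide

theorem hexagon_mirror :
    ∀ a u v w : ZMod 7, [a, 5 * a, 0, 3 * a, u, v, w].Nodup → u ≠ 2 * a → u ≠ 4 * a →
      w ≠ 4 * a → u = 6 * a ∧ v = 4 * a ∧ w = 2 * a := by
  decide

theorem exists_three_pow_mul_eq {a b : ZMod 7} (ha : a ≠ 0) (hb : b ≠ 0) :
    ∃ n : ℕ, b = 3 ^ n * a := by
  obtain ⟨n, -, hn⟩ :=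
    (by decide : ∀ a b : ZMod 7, a ≠ 0 → b ≠ 0 → ∃ n < 6, b = 3 ^ n * a) a b ha hb
  exact ⟨n, hn⟩

namespace NormalizedRotation

variable {R : ZMod 7 → Perm (ZMod 7)} {a : ZMod 7}

theorem apply_five_mul_eq_zero (hR : IsRotationK7 R) (htri : IsTriangular R) (h0 : R 0 = mul5)
    (ha : a ≠ 0) : R a (5 * a) = 0 := by
  have h := htri.apply_apply_eq (hR 0).1 (Ne.symm ha)
  rwa [h0] at h

theorem apply_zero_eq_three_mul (htri : IsTriangular R) (h0 : R 0 = mul5) (ha : a ≠ 0) :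
    R a 0 = 3 * a := by
  have h := htri 0 (3 * a) (Ne.symm (mul_ne_zero (by decide) ha))
  have e : mul5 (3 * a) = a := show 5 * (3 * a) = a by ring_nf; reduce_mod_char
  rwa [h0, e] at h

theorem exists_row (hR : IsRotationK7 R) (htri : IsTriangular R) (h0 : R 0 = mul5)
    (ha : a ≠ 0) :
    ∃ u v w, R a (3 * a) = u ∧ R a u = v ∧ R a v = w ∧ R a w = 5 * a ∧
      [a, 5 * a, 0, 3 * a, u, v, w].Nodup ∧ R a = [5 * a, 0, 3 * a, u, v, w].formPerm := by
  have h5a : 5 * a ≠ a := (by decide : ∀ a : ZMod 7, a ≠ 0 → 5 * a ≠ a) a ha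
  set u := R a (3 * a)
  set v := R a u
  set w := R a v
  have hit : List.iterate (R a) (5 * a) 6 = [5 * a, 0, 3 * a, u, v, w] := by
    simp only [List.iterate, apply_five_mul_eq_zero hR htri h0 ha,
      apply_zero_eq_three_mul htri h0 ha]
    rfl
  have hnodup := hR.nodup_iterate h5a
  have hform := hR.formPerm_iterate h5a
  rw [hit] at hnodup hform
  have hlast := List.formPerm_apply_getLast (5 * a) [0, 3 * a, u, v, w]
  rw [hform] at hlast
  exact ⟨u, v, w, rfl, rfl, rfl, hlast, hnodup, hform.symm⟩

theorem apply_three_mul_ne_five_mul (hR : IsRotationK7 R) (htri : IsTriangular R)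
    (h0 : R 0 = mul5) (ha : a ≠ 0) : R a (3 * a) ≠ 5 * a := by
  obtain ⟨u, v, w, hu, -, -, -, hnodup, -⟩ := exists_row hR htri h0 ha
  rw [hu]
  rintro rfl
  simp at hnodup

theorem apply_three_mul_ne_two_mul (hR : IsRotationK7 R) (htri : IsTriangular R)
    (h0 : R 0 = mul5) (ha : a ≠ 0) : R a (3 * a) ≠ 2 * a := by
  intro h
  have ha3 : a ≠ 3 * a := (by decide : ∀ a : ZMod 7, a ≠ 0 → a ≠ 3 * a) a ha
  have hface := htri.apply_apply_eq (hR a).1 ha3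
  rw [h] at hface
  refine apply_three_mul_ne_five_mul hR htri h0 (a := 3 * a) (mul_ne_zero (by decide) ha) ?_
  have e1 : 3 * (3 * a) = 2 * a := by ring_nf; reduce_mod_char
  have e2 : 5 * (3 * a) = a := by ring_nf; reduce_mod_char
  rwa [e1, e2]

theorem apply_four_mul_ne_five_mul (hR : IsRotationK7 R) (htri : IsTriangular R)
    (h0 : R 0 = mul5) (ha : a ≠ 0) : R a (4 * a) ≠ 5 * a := by
  intro h
  have hface := htri a (4 * a) ((by decide : ∀ a : ZMod 7, a ≠ 0 → a ≠ 4 * a) a ha)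
  rw [h] at hface
  refine apply_three_mul_ne_five_mul hR htri h0 (a := 5 * a) (mul_ne_zero (by decide) ha) ?_
  have e1 : 3 * (5 * a) = a := by ring_nf; reduce_mod_char
  have e2 : 5 * (5 * a) = 4 * a := by ring_nf; reduce_mod_char
  rwa [e1, e2]

theorem eq_rhoClass_of_apply_six_mul (hR : IsRotationK7 R) (htri : IsTriangular R)
    (h0 : R 0 = mul5) (ha : a ≠ 0) (h : R a (6 * a) = 5 * a) : R a = rhoClass a := by
  obtain ⟨u, v, w, hu, -, -, hw, hnodup, hform⟩ := exists_row hR htri h0 ha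
  obtain rfl : w = 6 * a := (R a).injective (hw.trans h.symm)
  obtain ⟨rfl, rfl⟩ :=
    hexagon_classical a u v hnodup (hu ▸ apply_three_mul_ne_two_mul hR htri h0 ha)
  rw [hform, rhoClass_eq_formPerm ha]

theorem eq_rhoClass_three_mul_of_apply_three_mul (hR : IsRotationK7 R) (htri : IsTriangular R)
    (h0 : R 0 = mul5) (ha : a ≠ 0) (h : R a (3 * a) = 4 * a) :
    R (3 * a) = rhoClass (3 * a) := by
  apply eq_rhoClass_of_apply_six_mul hR htri h0 (mul_ne_zero (by decide) ha)
  have ha3 : a ≠ 3 * a := (by decide : ∀ a : ZMod 7, a ≠ 0 → a ≠ 3 * a) a ha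
  have hface := htri.apply_apply_eq (hR a).1 ha3
  rw [h] at hface
  have e1 : 6 * (3 * a) = 4 * a := by ring_nf; reduce_mod_char
  have e2 : 5 * (3 * a) = a := by ring_nf; reduce_mod_char
  rwa [e1, e2]

theorem eq_rhoMirror_of_apply_three_mul_ne (hR : IsRotationK7 R) (htri : IsTriangular R)
    (h0 : R 0 = mul5) (ha : a ≠ 0) (h : R a (3 * a) ≠ 4 * a) : R a = rhoMirror a := by
  obtain ⟨u, v, w, hu, -, -, hw, hnodup, hform⟩ := exists_row hR htri h0 ha
  have hw4 : w ≠ 4 * a := by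
    rintro rfl
    exact apply_four_mul_ne_five_mul hR htri h0 ha hw
  obtain ⟨rfl, rfl, rfl⟩ :=
    hexagon_mirror a u v w hnodup (hu ▸ apply_three_mul_ne_two_mul hR htri h0 ha) (hu ▸ h) hw4
  rw [hform, rhoMirror_eq_formPerm ha]

theorem eq_rhoClass_or_eq_rhoMirror (hR : IsRotationK7 R) (htri : IsTriangular R)
    (h0 : R 0 = mul5) : R = rhoClass ∨ R = rhoMirror := by
  by_cases hcl : ∃ a ≠ 0, R a (3 * a) = 4 * a
  · obtain ⟨a, ha, h⟩ := hcl
    have ha3 : 3 * a ≠ 0 := mul_ne_zero (by decide) ha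
    have hpow : ∀ n : ℕ, R (3 ^ n * (3 * a)) = rhoClass (3 ^ n * (3 * a)) := by
      intro n
      induction n with
      | zero => simpa using eq_rhoClass_three_mul_of_apply_three_mul hR htri h0 ha h
      | succ n ih =>
        have hb : 3 ^ n * (3 * a) ≠ 0 := mul_ne_zero (pow_ne_zero _ (by decide)) ha3
        rw [pow_succ', mul_assoc]
        exact eq_rhoClass_three_mul_of_apply_three_mul hR htri h0 hb
          (by rw [ih, rhoClass_apply_three_mul])
    left
    funext b
    by_cases hb : b = 0
    · rw [hb, h0, rhoClass_zero]
    · obtain ⟨n, rfl⟩ := exists_three_pow_mul_eq ha3 hb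
      exact hpow n
  · right
    funext b
    by_cases hb : b = 0
    · rw [hb, h0, rhoMirror_zero]
    · exact eq_rhoMirror_of_apply_three_mul_ne hR htri h0 hb fun h => hcl ⟨b, hb, h⟩

end NormalizedRotation

/-- Every triangular combinatorial embedding of `K7` is isomorphic to the
classical toroidal embedding `ρ_x(y) = 5y - 4x`; in particular, under the
isomorphism, its 14 triangular faces are exactly the blocks of the two
orthogonal Fano planes `fanoB1` and `fanoB2`. -/
theorem triangular_embedding_K7_iso_classical
    (ρ : ZMod 7 → Equiv.Perm (ZMod 7)) (hrot : IsRotationK7 ρ)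
    (htri : ∀ x y : ZMod 7, x ≠ y → ρ (ρ x y) x = y) :
    ∃ σ : Equiv.Perm (ZMod 7),
      ((∀ x y : ZMod 7, σ (ρ x y) = rhoClass (σ x) (σ y)) ∨
       (∀ x y : ZMod 7, σ (ρ x y) = (rhoClass (σ x))⁻¹ (σ y))) ∧
      (∀ x y : ZMod 7, x ≠ y →
        ({σ x, σ y, σ (ρ x y)} : Finset (ZMod 7)) ∈ fanoB1 ∪ fanoB2) ∧
      (∀ t ∈ fanoB1 ∪ fanoB2, ∃ x y : ZMod 7, x ≠ y ∧
        ({σ x, σ y, σ (ρ x y)} : Finset (ZMod 7)) = t) := by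
  obtain ⟨e, he⟩ := hrot.exists_conjRot_eq_mul5
  rcases NormalizedRotation.eq_rhoClass_or_eq_rhoMirror (hrot.conjRot e)
      (IsTriangular.conjRot htri e) he with hcl | hmir
  · exact ⟨e, Or.inl (apply_eq_of_conjRot_eq hcl),
      faces_of_conjRot_eq hcl rhoClass_faces_mem rhoClass_faces_surj⟩
  · have hinv : conjRot (invPerm * e) ρ = fun x => (rhoClass x)⁻¹ := by
      rw [conjRot_mul, hmir, rhoMirror, ← conjRot_mul, invPerm_mul_self, conjRot_one]
    exact ⟨invPerm * e, Or.inr (apply_eq_of_conjRot_eq hinv),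
      faces_of_conjRot_eq hinv rhoClass_inv_faces_mem rhoClass_inv_faces_surj⟩
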